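/- arXiv:2007.13795 — 6 statements merged into one kernel-verified Lean document; each statement's English description precedes it below -/
import Mathlib

section
/- (Quantitative rigidity, pointwise form.) Let 0 < λ < ν be real numbers and let J be a real symmetric 3×3 matrix whose characteristic polynomial is (X − λ)²(X − ν), i.e. J has eigenvalue λ with multiplicity two and eigenvalue ν with multiplicity one. Set K := J − diag(λ, λ, ν). If the Frobenius norm of K satisfies |K| ≤ ν − λ, then ∑_{i,j} K_{ij}² ≤ 4(K₁₃² + K₂₃²); i.e., writing a := (K₁₃, K₂₃), one has |K| ≤ 2|a|. -/
open Matrix Polynomial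

set_option maxHeartbeats 1000000 in
/-- Quantitative rigidity, pointwise form: if a real symmetric `3×3` matrix `J` has
characteristic polynomial `(X − λ)²(X − ν)` with `0 < λ < ν`, and `K := J − diag(λ, λ, ν)`
has Frobenius norm at most `ν − λ`, then `|K|² ≤ 4(K₁₃² + K₂₃²)`, i.e. `|K| ≤ 2|a|`
for `a = (K₁₃, K₂₃)`. -/
theorem quantitative_rigidity (lam nu : ℝ) (hlam : 0 < lam) (hlt : lam < nu)
    (J : Matrix (Fin 3) (Fin 3) ℝ) (hJsym : Jᵀ = J)
    (hchar : J.charpoly = (X - C lam) ^ 2 * (X - C nu))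
    (K : Matrix (Fin 3) (Fin 3) ℝ) (hK : K = J - Matrix.diagonal ![lam, lam, nu])
    (hsmall : Real.sqrt (∑ i, ∑ j, K i j ^ 2) ≤ nu - lam) :
    ∑ i, ∑ j, K i j ^ 2 ≤ 4 * (K 0 2 ^ 2 + K 1 2 ^ 2) := by
  have hε : 0 < nu - lam := sub_pos.2 hlt
  -- trace of J
  have htrJ : J.trace = 2 * lam + nu := by
    have hc : ((X - C lam) ^ 2 * (X - C nu) : ℝ[X]).coeff 2 = -(2 * lam + nu) := by
      have hpoly : (X - C lam) ^ 2 * (X - C nu)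
          = X ^ 3 - C (lam + lam + nu) * X ^ 2
            + C (lam * lam + lam * nu + lam * nu) * X - C (lam * lam * nu) := by
        simp only [C_add, C_mul]; ring
      rw [hpoly]
      simp only [coeff_add, coeff_sub, coeff_C_mul, coeff_X_pow, coeff_C, coeff_X]
      norm_num
      try ring
    rw [Matrix.trace_eq_neg_charpoly_coeff, hchar, Fintype.card_fin, hc]
    ring
  -- Cayley-Hamilton and the square-zero matrix B
  set A : Matrix (Fin 3) (Fin 3) ℝ := J - lam • 1 with hA
  set B : Matrix (Fin 3) (Fin 3) ℝ := A * A - (nu - lam) • A with hBdef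
  have hBB : B * B = 0 := by
    set q : ℝ[X] := (X - C lam) * (X - C lam) - C (nu - lam) * (X - C lam) with hq
    have key : q * q = ((X - C lam) ^ 2 * (X - C nu)) * (X - C nu) := by
      rw [hq]; simp only [C_sub]; ring
    have hBav : aeval J q = B := by
      rw [hBdef, hA]
      simp [q, Algebra.algebraMap_eq_smul_one, sub_mul, smul_mul_assoc]
      module
    calc B * B = aeval J (q * q) := by rw [_root_.map_mul, hBav]
      _ = aeval J J.charpoly * aeval J (X - C nu) := by rw [key, ← hchar, _root_.map_mul]
      _ = 0 := by rw [aeval_self_charpoly, zero_mul]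
  -- symmetry
  have hAsym : Aᵀ = A := by rw [hA]; simp [transpose_sub, hJsym]
  have hAs : ∀ i j, A j i = A i j := fun i j => congrFun (congrFun hAsym i) j
  have hBsym : Bᵀ = B := by
    rw [hBdef]; simp [transpose_sub, transpose_mul, hAsym]
  have hBs : ∀ i j, B j i = B i j := fun i j => congrFun (congrFun hBsym i) j
  -- diagonal entries of B vanish
  have hBdiag : ∀ i, B i i = 0 := by
    intro i
    have h0 : (B * B) i i = 0 := by rw [hBB]; rfl
    rw [Matrix.mul_apply, Fin.sum_univ_three] at h0
    rw [hBs 0 i, hBs 1 i, hBs 2 i] at h0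
    have z0 : B 0 i = 0 := mul_self_eq_zero.mp
      (by nlinarith [h0, mul_self_nonneg (B 1 i), mul_self_nonneg (B 2 i)])
    have z1 : B 1 i = 0 := mul_self_eq_zero.mp
      (by nlinarith [h0, mul_self_nonneg (B 0 i), mul_self_nonneg (B 2 i)])
    have z2 : B 2 i = 0 := mul_self_eq_zero.mp
      (by nlinarith [h0, mul_self_nonneg (B 0 i), mul_self_nonneg (B 1 i)])
    have hz : ∀ j, B j i = 0 := by
      intro j; fin_cases j <;> assumption
    exact hz i
  -- row identities for A
  have hE : ∀ i, A 0 i ^ 2 + A 1 i ^ 2 + A 2 i ^ 2 = (nu - lam) * A i i := by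
    intro i
    have h0 := hBdiag i
    rw [hBdef] at h0
    simp only [Matrix.sub_apply, Matrix.smul_apply, smul_eq_mul] at h0
    rw [Matrix.mul_apply, Fin.sum_univ_three] at h0
    rw [hAs 0 i, hAs 1 i, hAs 2 i] at h0
    linear_combination h0
  -- entries of A in terms of K
  have hA00 : A 0 0 = K 0 0 := by
    rw [hA, hK]; simp [Matrix.sub_apply, Matrix.smul_apply, Matrix.one_apply, Matrix.diagonal_apply]
  have hA01 : A 0 1 = K 0 1 := by
    rw [hA, hK]; simp [Matrix.sub_apply, Matrix.smul_apply, Matrix.one_apply, Matrix.diagonal_apply]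
  have hA02 : A 0 2 = K 0 2 := by
    rw [hA, hK]; simp [Matrix.sub_apply, Matrix.smul_apply, Matrix.one_apply, Matrix.diagonal_apply]
  have hA10 : A 1 0 = K 1 0 := by
    rw [hA, hK]; simp [Matrix.sub_apply, Matrix.smul_apply, Matrix.one_apply, Matrix.diagonal_apply]
  have hA11 : A 1 1 = K 1 1 := by
    rw [hA, hK]; simp [Matrix.sub_apply, Matrix.smul_apply, Matrix.one_apply, Matrix.diagonal_apply]
  have hA12 : A 1 2 = K 1 2 := by
    rw [hA, hK]; simp [Matrix.sub_apply, Matrix.smul_apply, Matrix.one_apply, Matrix.diagonal_apply]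
  have hA20 : A 2 0 = K 2 0 := by
    rw [hA, hK]; simp [Matrix.sub_apply, Matrix.smul_apply, Matrix.one_apply, Matrix.diagonal_apply]
  have hA21 : A 2 1 = K 2 1 := by
    rw [hA, hK]; simp [Matrix.sub_apply, Matrix.smul_apply, Matrix.one_apply, Matrix.diagonal_apply]
  have hA22 : A 2 2 = K 2 2 + (nu - lam) := by
    rw [hA, hK]
    simp [Matrix.sub_apply, Matrix.smul_apply, Matrix.one_apply, Matrix.diagonal_apply]
    try ring
  have E0 := hE 0; have E1 := hE 1; have E2 := hE 2
  rw [hA00, hA10, hA20] at E0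
  rw [hA01, hA11, hA21] at E1
  rw [hA02, hA12, hA22] at E2
  -- symmetry of K
  have hKsym : Kᵀ = K := by
    rw [hK]; simp [transpose_sub, hJsym]
  have hK10 : K 1 0 = K 0 1 := congrFun (congrFun hKsym 0) 1
  have hK20 : K 2 0 = K 0 2 := congrFun (congrFun hKsym 0) 2
  have hK21 : K 2 1 = K 1 2 := congrFun (congrFun hKsym 1) 2
  rw [hK10, hK20] at E0
  rw [hK21] at E1
  -- trace of K
  have htrK : K 0 0 + K 1 1 + K 2 2 = 0 := by
    have h1 : K.trace = 0 := by
      rw [hK, Matrix.trace_sub, htrJ, Matrix.trace_diagonal]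
      simp [Fin.sum_univ_three]
      try ring
    rw [Matrix.trace, Fin.sum_univ_three] at h1
    simpa [Matrix.diag] using h1
  -- smallness
  have hS0 : (0:ℝ) ≤ ∑ i, ∑ j, K i j ^ 2 := by positivity
  have hS : ∑ i, ∑ j, K i j ^ 2 ≤ (nu - lam) ^ 2 := by
    nlinarith [Real.sq_sqrt hS0, Real.sqrt_nonneg (∑ i, ∑ j, K i j ^ 2), hsmall]
  simp only [Fin.sum_univ_three] at hS ⊢
  rw [hK10, hK20, hK21] at hS ⊢
  -- sign facts
  have hd1 : 0 ≤ K 0 0 := by nlinarith [E0, sq_nonneg (K 0 0), sq_nonneg (K 0 1), sq_nonneg (K 0 2)]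
  have hd2 : 0 ≤ K 1 1 := by nlinarith [E1, sq_nonneg (K 1 1), sq_nonneg (K 0 1), sq_nonneg (K 1 2)]
  have hd3 : K 2 2 ≤ 0 := by linarith
  have h2 : 0 ≤ (nu - lam) + 2 * K 2 2 := by nlinarith [hS, E0, E1, E2, htrK]
  nlinarith [E0, E1, E2, htrK, mul_nonneg (neg_nonneg.mpr hd3) h2]
end

section
/- (Qualitative rigidity.) Let 0 < λ < ν be real numbers and let J be a real symmetric 3×3 matrix whose characteristic polynomial is (X − λ)²(X − ν). Set K := J − diag(λ, λ, ν). If J₁₃ = J₂₃ = 0 and the Frobenius norm of K satisfies |K| < ν − λ, then J = diag(λ, λ, ν). -/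
open Matrix Polynomial

/-- Qualitative rigidity: if a real symmetric `3×3` matrix `J` has characteristic
polynomial `(X − λ)²(X − ν)` with `0 < λ < ν`, satisfies `J₁₃ = J₂₃ = 0`, and
`K := J − diag(λ, λ, ν)` has Frobenius norm `< ν − λ`, then `J = diag(λ, λ, ν)`. -/
theorem qualitative_rigidity (lam nu : ℝ) (hlam : 0 < lam) (hlt : lam < nu)
    (J : Matrix (Fin 3) (Fin 3) ℝ) (hJsym : Jᵀ = J)
    (hchar : J.charpoly = (X - C lam) ^ 2 * (X - C nu))
    (K : Matrix (Fin 3) (Fin 3) ℝ) (hK : K = J - Matrix.diagonal ![lam, lam, nu])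
    (hJ13 : J 0 2 = 0) (hJ23 : J 1 2 = 0)
    (hsmall : Real.sqrt (∑ i, ∑ j, K i j ^ 2) < nu - lam) :
    J = Matrix.diagonal ![lam, lam, nu] := by
  have h20 : J 2 0 = 0 := by
    have := congrFun (congrFun hJsym 2) 0
    simp [Matrix.transpose_apply] at this
    rw [← this, hJ13]
  have h21 : J 2 1 = 0 := by
    have := congrFun (congrFun hJsym 2) 1
    simp [Matrix.transpose_apply] at this
    rw [← this, hJ23]
  have h10 : J 1 0 = J 0 1 := by
    have := congrFun (congrFun hJsym 0) 1
    simpa [Matrix.transpose_apply] using this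
  obtain ⟨a, ha⟩ : ∃ a, J 0 0 = a := ⟨_, rfl⟩
  obtain ⟨b, hb⟩ : ∃ b, J 0 1 = b := ⟨_, rfl⟩
  obtain ⟨c, hc⟩ : ∃ c, J 1 1 = c := ⟨_, rfl⟩
  obtain ⟨d, hd⟩ : ∃ d, J 2 2 = d := ⟨_, rfl⟩
  -- evaluated characteristic polynomial
  have E : ∀ t : ℝ, ((t - a) * (t - c) - b * b) * (t - d) = (t - lam)^2 * (t - nu) := by
    intro t
    have h := congrArg (Polynomial.eval t) hchar
    rw [Matrix.charpoly, Matrix.det_fin_three] at h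
    simp [Matrix.charmatrix_apply_eq, Matrix.charmatrix_apply_ne, hJ13, hJ23, h20, h21, h10,
      ha, hb, hc, hd] at h
    linear_combination h
  -- d is close to nu
  have hKd : K 2 2 = d - nu := by
    rw [hK]; simp [Matrix.diagonal, hd]
  have hsum : (d - nu)^2 ≤ ∑ i, ∑ j, K i j ^ 2 := by
    rw [← hKd]
    calc K 2 2 ^ 2 ≤ ∑ j, K 2 j ^ 2 :=
          Finset.single_le_sum (f := fun j => K 2 j ^ 2)
            (fun j _ => sq_nonneg _) (Finset.mem_univ (2 : Fin 3))
    _ ≤ ∑ i, ∑ j, K i j ^ 2 :=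
          Finset.single_le_sum (f := fun i => ∑ j, K i j ^ 2)
            (fun i _ => Finset.sum_nonneg fun j _ => sq_nonneg _) (Finset.mem_univ (2 : Fin 3))
  have habs : |d - nu| < nu - lam := by
    have h1 : |d - nu| ≤ Real.sqrt (∑ i, ∑ j, K i j ^ 2) := by
      rw [← Real.sqrt_sq_eq_abs]
      exact Real.sqrt_le_sqrt hsum
    linarith
  have hdnu : d = nu := by
    have h0 : (d - lam)^2 * (d - nu) = 0 := by linear_combination -E d
    rcases mul_eq_zero.mp h0 with h | h
    · have hdl : d = lam := by nlinarith [sq_nonneg (d - lam)]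
      rw [hdl, abs_of_nonpos (by linarith)] at habs
      linarith
    · linarith
  subst hdnu
  -- three evaluations
  have q1 : (lam - a) * (lam - c) - b * b = 0 := by
    have h' : ((lam - a) * (lam - c) - b * b) * (lam - d) = 0 := by
      linear_combination E lam
    rcases mul_eq_zero.mp h' with h | h
    · exact h
    · exfalso; linarith
  have q2 : (d + 1 - a) * (d + 1 - c) - b * b = (d + 1 - lam)^2 := by
    linear_combination E (d + 1)
  have q3 : (d - 1 - a) * (d - 1 - c) - b * b = (d - 1 - lam)^2 := by
    linear_combination -E (d - 1)
  have hs : a + c = 2 * lam := by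
    linear_combination (-1/2 : ℝ) * q2 + (1/2 : ℝ) * q3
  have hkey : b * b = -((lam - a) * (lam - a)) := by
    linear_combination -q1 + (a - lam) * hs
  have hbsq : b * b = 0 := by nlinarith [hkey, sq_nonneg (lam - a), mul_self_nonneg b]
  have hb0 : b = 0 := mul_self_eq_zero.mp hbsq
  have hsq : (lam - a) * (lam - a) = 0 := by
    linear_combination hkey - hbsq
  have ha0 : a = lam := by
    have := mul_self_eq_zero.mp hsq; linarith
  have hc0 : c = lam := by linarith
  ext i j
  fin_cases i <;> fin_cases j <;>
    simp [Matrix.diagonal, hJ13, hJ23, h20, h21, ha, hb, hc, hd, h10, ha0, hb0, hc0]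
end

section
/- Let θ ∈ (0,1) and α₀, C > 0, and set β := (1/θ − 1)⁻¹ and C̃ := C·(1/θ − 1). Suppose y : [0, ∞) → [0, ∞) is continuously differentiable, y(0) > 0, and y′(t) + C·y(t)^{1/θ}·α₀^{1 − 1/θ} ≤ 0 for all t ≥ 0. Then for all t ≥ 0, y(t) ≤ α₀·((α₀/y(0))^{1/β} + C̃·t)^{−β}. -/
/-!
With `u = y / α₀` and `p = 1/θ - 1 > 0` the differential inequality reads `u' ≤ -C u^(1+p)`,
so `(u^(-p))' = -p u^(-p-1) u' ≥ p C`. Hence `u^(-p)` grows at least linearly with slope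
`p C = C̃`, and raising `u(0)^(-p) + C̃ t ≤ u(t)^(-p)` to the power `-1/p = -β` gives the bound.
Positivity of `u` on `[0, t]`, needed to differentiate `u^(-p)`, comes from `y' ≤ 0`.
-/

open Set

lemma monotoneOn_of_forall_hasDerivWithinAt_nonneg {s : Set ℝ} (hs : Convex ℝ s)
    {f f' : ℝ → ℝ} (hf : ∀ x ∈ s, HasDerivWithinAt f (f' x) s x) (hf' : ∀ x ∈ s, 0 ≤ f' x) :
    MonotoneOn f s :=
  monotoneOn_of_hasDerivWithinAt_nonneg hs (fun x hx => (hf x hx).continuousWithinAt)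
    (fun x hx => (hf x (interior_subset hx)).mono interior_subset)
    (fun x hx => hf' x (interior_subset hx))

lemma antitoneOn_of_forall_hasDerivWithinAt_nonpos {s : Set ℝ} (hs : Convex ℝ s)
    {f f' : ℝ → ℝ} (hf : ∀ x ∈ s, HasDerivWithinAt f (f' x) s x) (hf' : ∀ x ∈ s, f' x ≤ 0) :
    AntitoneOn f s :=
  antitoneOn_of_hasDerivWithinAt_nonpos hs (fun x hx => (hf x hx).continuousWithinAt)
    (fun x hx => (hf x (interior_subset hx)).mono interior_subset)
    (fun x hx => hf' x (interior_subset hx))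

section PowerDecay

variable {s : Set ℝ} {u u' : ℝ → ℝ} {p K : ℝ}

lemma monotoneOn_rpow_neg_sub_of_deriv_le (hs : Convex ℝ s)
    (hu : ∀ x ∈ s, HasDerivWithinAt u (u' x) s x) (hpos : ∀ x ∈ s, 0 < u x) (hp : 0 ≤ p)
    (hode : ∀ x ∈ s, u' x ≤ -K * u x ^ (1 + p)) :
    MonotoneOn (fun x => u x ^ (-p) - p * K * x) s := by
  refine monotoneOn_of_forall_hasDerivWithinAt_nonneg hs
    (fun x hx => ((hu x hx).rpow_const (Or.inl (hpos x hx).ne')).sub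
      ((hasDerivWithinAt_id x s).const_mul (p * K))) fun x hx => ?_
  have hux := hpos x hx
  have hcancel : u x ^ (1 + p) * u x ^ (-p - 1) = 1 := by
    rw [← Real.rpow_add hux, show 1 + p + (-p - 1) = 0 by ring, Real.rpow_zero]
  have hlow : p * K ≤ -p * u' x * u x ^ (-p - 1) :=
    calc p * K = -p * (-K * u x ^ (1 + p)) * u x ^ (-p - 1) := by
          linear_combination (-p * K) * hcancel
      _ ≤ -p * u' x * u x ^ (-p - 1) :=
          mul_le_mul_of_nonneg_right (mul_le_mul_of_nonpos_left (hode x hx) (by linarith))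
            (Real.rpow_nonneg hux.le _)
  simp only [mul_one]
  linarith

lemma le_rpow_of_deriv_le_neg_mul_rpow (hs : Convex ℝ s)
    (hu : ∀ x ∈ s, HasDerivWithinAt u (u' x) s x) (hpos : ∀ x ∈ s, 0 < u x) (hp : 0 < p)
    (hK : 0 ≤ K) (hode : ∀ x ∈ s, u' x ≤ -K * u x ^ (1 + p)) {a b : ℝ} (ha : a ∈ s)
    (hb : b ∈ s) (hab : a ≤ b) :
    u b ≤ (u a ^ (-p) + p * K * (b - a)) ^ (-p⁻¹) := by
  have hgrowth : u a ^ (-p) + p * K * (b - a) ≤ u b ^ (-p) := by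
    have := monotoneOn_rpow_neg_sub_of_deriv_le hs hu hpos hp.le hode ha hb hab
    simp only at this
    linarith
  have hbase : 0 < u a ^ (-p) + p * K * (b - a) := by
    have := Real.rpow_pos_of_pos (hpos a ha) (-p)
    have : 0 ≤ p * K * (b - a) := by have := sub_nonneg.2 hab; positivity
    linarith
  calc u b = (u b ^ (-p)) ^ (-p)⁻¹ := (Real.rpow_rpow_inv (hpos b hb).le (by linarith)).symm
    _ ≤ (u a ^ (-p) + p * K * (b - a)) ^ (-p⁻¹) := by
      rw [inv_neg]
      exact Real.rpow_le_rpow_of_nonpos hbase hgrowth (by simp [hp.le])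

end PowerDecay

lemma rpow_mul_rpow_one_sub_div {y α : ℝ} (hy : 0 ≤ y) (hα : 0 < α) (q : ℝ) :
    y ^ q * α ^ (1 - q) / α = (y / α) ^ q := by
  rw [Real.div_rpow hy hα.le, Real.rpow_sub hα, Real.rpow_one]
  field_simp

theorem bihari_hypocoercive_energy_general (θ : ℝ) (hθ : θ ∈ Set.Ioo (0 : ℝ) 1)
    (α₀ C : ℝ) (hα₀ : 0 < α₀) (hC : 0 < C)
    (β Ctil : ℝ) (hβ : β = (1 / θ - 1)⁻¹) (hCtil : Ctil = C * (1 / θ - 1))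
    (y y' : ℝ → ℝ)
    (hy_deriv : ∀ t ∈ Set.Ici (0 : ℝ), HasDerivWithinAt y (y' t) (Set.Ici 0) t)
    (hy_nonneg : ∀ t ∈ Set.Ici (0 : ℝ), 0 ≤ y t)
    (hode : ∀ t ∈ Set.Ici (0 : ℝ),
      y' t + C * y t ^ (1 / θ) * α₀ ^ (1 - 1 / θ) ≤ 0) :
    ∀ t ∈ Set.Ici (0 : ℝ),
      y t ≤ α₀ * ((α₀ / y 0) ^ (1 / β) + Ctil * t) ^ (-β) := by
  set p := 1 / θ - 1 with hp_def
  have hp : 0 < p := by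
    rw [hp_def, sub_pos, lt_div_iff₀ hθ.1]
    linarith [hθ.2]
  subst hβ hCtil
  have hanti : AntitoneOn y (Ici 0) :=
    antitoneOn_of_forall_hasDerivWithinAt_nonpos (convex_Ici 0) hy_deriv fun s hs => by
      have := hy_nonneg s hs
      linarith [hode s hs, show 0 ≤ C * y s ^ (1 / θ) * α₀ ^ (1 - 1 / θ) by positivity]
  have hode_rescaled : ∀ s ∈ Ici (0 : ℝ), y' s / α₀ ≤ -C * (y s / α₀) ^ (1 + p) := fun s hs => by
    rw [show 1 + p = 1 / θ by ring, neg_mul, ← rpow_mul_rpow_one_sub_div (hy_nonneg s hs) hα₀,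
      le_neg, ← mul_div_assoc, ← mul_assoc, ← neg_div, div_le_div_iff_of_pos_right hα₀]
    linarith [hode s hs]
  intro t ht
  rcases le_or_gt (y t) 0 with hyt | hyt
  · have hy0 := hy_nonneg 0 self_mem_Ici
    refine hyt.trans (mul_nonneg hα₀.le (Real.rpow_nonneg (add_nonneg ?_ ?_) _))
    · exact Real.rpow_nonneg (div_nonneg hα₀.le hy0) _
    · exact mul_nonneg (mul_nonneg hC.le hp.le) ht
  have hpos : ∀ s ∈ Icc 0 t, 0 < y s / α₀ := fun s hs =>
    div_pos (hyt.trans_le (hanti hs.1 ht hs.2)) hα₀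
  have hbound := le_rpow_of_deriv_le_neg_mul_rpow (convex_Icc 0 t)
    (fun s hs => ((hy_deriv s hs.1).mono Icc_subset_Ici_self).div_const α₀) hpos hp hC.le
    (fun s hs => hode_rescaled s hs.1) (left_mem_Icc.2 ht) (right_mem_Icc.2 ht) ht
  have hy0α : 0 ≤ y 0 / α₀ := (hpos 0 (left_mem_Icc.2 ht)).le
  rw [Real.rpow_neg hy0α, ← Real.inv_rpow hy0α, inv_div, sub_zero, mul_comm p C] at hbound
  rw [one_div, inv_inv]
  exact (div_le_iff₀' hα₀).1 hbound

/-- Nonlinear Gronwall estimate for a `θ`-coercive energy: if `y : [0,∞) → [0,∞)` is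
continuously differentiable with `y(0) > 0` and
`y′(t) + C·y(t)^{1/θ}·α₀^{1−1/θ} ≤ 0` for all `t ≥ 0`, then
`y(t) ≤ α₀·((α₀/y(0))^{1/β} + C̃·t)^{−β}` where `β = (1/θ − 1)⁻¹` and
`C̃ = C·(1/θ − 1)`. -/
theorem bihari_hypocoercive_energy (θ : ℝ) (hθ : θ ∈ Set.Ioo (0 : ℝ) 1)
    (α₀ C : ℝ) (hα₀ : 0 < α₀) (hC : 0 < C)
    (β Ctil : ℝ) (hβ : β = (1 / θ - 1)⁻¹) (hCtil : Ctil = C * (1 / θ - 1))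
    (y y' : ℝ → ℝ)
    (hy_deriv : ∀ t ∈ Set.Ici (0 : ℝ), HasDerivWithinAt y (y' t) (Set.Ici 0) t)
    (hy'_cont : ContinuousOn y' (Set.Ici 0))
    (hy_nonneg : ∀ t ∈ Set.Ici (0 : ℝ), 0 ≤ y t)
    (hy0 : 0 < y 0)
    (hode : ∀ t ∈ Set.Ici (0 : ℝ),
      y' t + C * y t ^ (1 / θ) * α₀ ^ (1 - 1 / θ) ≤ 0) :
    ∀ t ∈ Set.Ici (0 : ℝ),
      y t ≤ α₀ * ((α₀ / y 0) ^ (1 / β) + Ctil * t) ^ (-β) :=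
  bihari_hypocoercive_energy_general θ hθ α₀ C hα₀ hC β Ctil hβ hCtil y y' hy_deriv hy_nonneg hode
end

section
/- Let T > 0, C > 0 and α₀ > 0, and define f(x) := x^{3/2} + x² for x ≥ 0 and F(x) := 1/√x − log(1 + 1/√x) for x > 0. Suppose e, d : [0, T) → [0, ∞) are continuous, e is continuously differentiable, e′(t) + d(t) ≤ C·f(e(t)) for all t ∈ (0, T), and e(0) ≤ α₀. Then for every t with 0 ≤ t < min(T, 2F(α₀)/C) and every m > 0 satisfying F(m) = F(α₀) − (C/2)·t, one has e(t) ≤ m and ∫₀ᵗ d(s) ds ≤ α₀ + C·t·f(m). -/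
/-- `f(x) = x^{3/2} + x²`. -/
noncomputable def fBihari (x : ℝ) : ℝ := x ^ ((3 : ℝ) / 2) + x ^ 2

/-- `F(x) = 1/√x − log(1 + 1/√x)`. -/
noncomputable def FBihari (x : ℝ) : ℝ :=
  1 / Real.sqrt x - Real.log (1 + 1 / Real.sqrt x)

/-!
Set `ψ(u) = F(e u) + (C/2) u`. Since `F' = -1/(2f)` and `e' ≤ C f(e)`, `ψ` is nondecreasing on
every interval where `e > 0`. If `e s > m ≥ α₀`, start at the last time `s₀ ≤ s` with `e s₀ = α₀`:
then `F(α₀) ≤ F(e s) + (C/2) s ≤ F(e s) + (C/2) t`, i.e. `F(e s) ≥ F(m)`, contradicting the strict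
decrease of `F`. The integral bound then follows by integrating `d ≤ C f(m) - e'`.
-/

open Real Set MeasureTheory

theorem ContinuousOn.exists_last_eq_of_lt {α δ : Type*} [ConditionallyCompleteLinearOrder α]
    [TopologicalSpace α] [OrderTopology α] [DenselyOrdered α] [LinearOrder δ]
    [TopologicalSpace δ] [OrderClosedTopology δ] {g : α → δ} {a b : α} {c : δ}
    (hab : a ≤ b) (hg : ContinuousOn g (Icc a b)) (ha : g a ≤ c) (hb : c < g b) :
    ∃ s ∈ Ico a b, g s = c ∧ ∀ u ∈ Ioc s b, c < g u := by
  set S := Icc a b ∩ g ⁻¹' Iic c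
  have hS : sSup S ∈ S :=
    (hg.preimage_isClosed_of_isClosed isClosed_Icc isClosed_Iic).csSup_mem
      ⟨a, left_mem_Icc.2 hab, ha⟩ ⟨b, fun u hu => hu.1.2⟩
  have hgt : ∀ u ∈ Ioc (sSup S) b, c < g u := fun u hu =>
    lt_of_not_ge fun hu' => hu.1.not_ge (le_csSup ⟨b, fun v hv => hv.1.2⟩
      ⟨⟨hS.1.1.trans hu.1.le, hu.2⟩, hu'⟩)
  have hlt : sSup S < b := hS.1.2.lt_of_ne fun h => (hb.trans_le (h ▸ hS.2)).false
  refine ⟨sSup S, ⟨hS.1.1, hlt⟩, le_antisymm hS.2 (le_of_not_gt fun hlow => ?_), hgt⟩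
  obtain ⟨u, hu, hgu⟩ := intermediate_value_Ioo hlt.le (hg.mono (Icc_subset_Icc_left hS.1.1))
    ⟨hlow, hb⟩
  exact (hgt u ⟨hu.1, hu.2.le⟩).ne' hgu

theorem intervalIntegral.integral_le_of_deriv_add_le {e e' d : ℝ → ℝ} {a b K : ℝ} (hab : a ≤ b)
    (he : ContinuousOn e (Icc a b)) (hderiv : ∀ u ∈ Ioo a b, HasDerivAt e (e' u) u)
    (he' : IntervalIntegrable e' volume a b) (hd : IntervalIntegrable d volume a b)
    (hK : ∀ u ∈ Ioo a b, e' u + d u ≤ K) :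
    ∫ u in a..b, d u ≤ e a - e b + (b - a) * K :=
  calc ∫ u in a..b, d u ≤ ∫ u in a..b, (K - e' u) :=
        integral_mono_on_of_le_Ioo hab hd (intervalIntegrable_const.sub he')
          fun u hu => by linarith [hK u hu]
    _ = e a - e b + (b - a) * K := by
        rw [integral_sub intervalIntegrable_const he', integral_const,
          integral_eq_sub_of_hasDerivAt_of_le hab he hderiv he', smul_eq_mul]
        ring

lemma fBihari_pos {x : ℝ} (hx : 0 < x) : 0 < fBihari x := by
  unfold fBihari; positivity

lemma fBihari_le_fBihari {x y : ℝ} (hx : 0 ≤ x) (hxy : x ≤ y) : fBihari x ≤ fBihari y := by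
  unfold fBihari; gcongr

lemma fBihari_eq_sqrt_pow {x : ℝ} (hx : 0 ≤ x) : fBihari x = √x ^ 3 + √x ^ 4 := by
  have h32 : x ^ ((3 : ℝ) / 2) = √x ^ 3 := by
    rw [sqrt_eq_rpow, ← rpow_natCast, ← rpow_mul hx]
    norm_num
  rw [fBihari, h32, show 4 = 2 * 2 from rfl, pow_mul, sq_sqrt hx]

lemma hasDerivAt_FBihari {x : ℝ} (hx : 0 < x) :
    HasDerivAt FBihari (-(2 * fBihari x)⁻¹) x := by
  have hs : 0 < √x := sqrt_pos.2 hx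
  have hinv : HasDerivAt (fun y => 1 / √y) (-(1 / (2 * √x)) / √x ^ 2) x := by
    simpa only [one_div, Pi.inv_def] using (hasDerivAt_sqrt hx.ne').inv hs.ne'
  refine (hinv.sub ((hinv.const_add 1).log (by positivity))).congr_deriv ?_
  rw [fBihari_eq_sqrt_pow hx.le]
  field_simp
  ring

lemma continuousOn_FBihari : ContinuousOn FBihari (Ioi 0) :=
  fun _ hx => (hasDerivAt_FBihari hx).continuousAt.continuousWithinAt

lemma FBihari_strictAntiOn : StrictAntiOn FBihari (Ioi 0) :=
  strictAntiOn_of_hasDerivWithinAt_neg (convex_Ioi 0) continuousOn_FBihari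
    (fun _ hx => (hasDerivAt_FBihari (interior_subset hx)).hasDerivWithinAt)
    fun _ hx => neg_neg_of_pos (inv_pos.2 (mul_pos two_pos (fBihari_pos (interior_subset hx))))

theorem FBihari_add_le_of_deriv_le {e e' : ℝ → ℝ} {C a b : ℝ} (hab : a ≤ b)
    (he : ContinuousOn e (Icc a b)) (hpos : ∀ u ∈ Icc a b, 0 < e u)
    (hderiv : ∀ u ∈ Ioo a b, HasDerivAt e (e' u) u)
    (hbound : ∀ u ∈ Ioo a b, e' u ≤ C * fBihari (e u)) :
    FBihari (e a) + C / 2 * a ≤ FBihari (e b) + C / 2 * b := by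
  have hψ : ∀ u ∈ Ioo a b, HasDerivAt (fun u => FBihari (e u) + C / 2 * u)
      (-(2 * fBihari (e u))⁻¹ * e' u + C / 2) u := fun u hu =>
    ((hasDerivAt_FBihari (hpos u (Ioo_subset_Icc_self hu))).comp u (hderiv u hu)).add
      ((hasDerivAt_id u).const_mul (C / 2) |>.congr_deriv (mul_one _))
  refine monotoneOn_of_hasDerivWithinAt_nonneg (f := fun u => FBihari (e u) + C / 2 * u)
    (f' := fun u => -(2 * fBihari (e u))⁻¹ * e' u + C / 2) (convex_Icc a b) ?_ ?_ ?_
    (left_mem_Icc.2 hab) (right_mem_Icc.2 hab) hab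
  · exact (continuousOn_FBihari.comp he hpos).add (continuousOn_const.mul continuousOn_id)
  · intro u hu
    rw [interior_Icc] at hu ⊢
    exact (hψ u hu).hasDerivWithinAt
  · intro u hu
    rw [interior_Icc] at hu
    have hf := fBihari_pos (hpos u (Ioo_subset_Icc_self hu))
    have : (2 * fBihari (e u))⁻¹ * e' u ≤ C / 2 :=
      calc (2 * fBihari (e u))⁻¹ * e' u ≤ (2 * fBihari (e u))⁻¹ * (C * fBihari (e u)) := by
            gcongr; exact hbound u hu
        _ = C / 2 := by field_simp
    linarith

theorem le_of_FBihari_le_sub {e e' : ℝ → ℝ} {C α₀ m a b : ℝ} (hC : 0 ≤ C) (hα₀ : 0 < α₀)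
    (hm : 0 < m) (he : ContinuousOn e (Icc a b)) (hderiv : ∀ u ∈ Ioo a b, HasDerivAt e (e' u) u)
    (hbound : ∀ u ∈ Ioo a b, e' u ≤ C * fBihari (e u)) (hea : e a ≤ α₀)
    (hFm : FBihari m ≤ FBihari α₀ - C / 2 * (b - a)) :
    ∀ s ∈ Icc a b, e s ≤ m := by
  intro s hs
  by_contra! hms
  have hα₀m : α₀ ≤ m := (FBihari_strictAntiOn.le_iff_ge hm hα₀).1 <| hFm.trans <|
    sub_le_self _ (mul_nonneg (div_nonneg hC two_pos.le) (sub_nonneg.2 (hs.1.trans hs.2)))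
  obtain ⟨s₀, hs₀, hes₀, hgt⟩ := (he.mono (Icc_subset_Icc_right hs.2)).exists_last_eq_of_lt hs.1
    hea (hα₀m.trans_lt hms)
  have hψ := FBihari_add_le_of_deriv_le hs₀.2.le (he.mono (Icc_subset_Icc hs₀.1 hs.2))
    (fun u hu => hu.1.eq_or_lt.elim (fun h => h ▸ hes₀ ▸ hα₀) fun h => hα₀.trans (hgt u ⟨h, hu.2⟩))
    (fun u hu => hderiv u ⟨hs₀.1.trans_lt hu.1, hu.2.trans_le hs.2⟩)
    (fun u hu => hbound u ⟨hs₀.1.trans_lt hu.1, hu.2.trans_le hs.2⟩)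
  have hFs : FBihari (e s) < FBihari m := FBihari_strictAntiOn hm (hm.trans hms) hms
  rw [hes₀] at hψ
  linarith [mul_nonneg hC (sub_nonneg.2 hs₀.1), mul_nonneg hC (sub_nonneg.2 hs.2)]

theorem bihari_local_general (T C α₀ : ℝ) (hC : 0 < C) (hα₀ : 0 < α₀)
    (e d e' : ℝ → ℝ)
    (hd_cont : ContinuousOn d (Set.Ico 0 T))
    (he_nonneg : ∀ t ∈ Set.Ico (0 : ℝ) T, 0 ≤ e t)
    (hd_nonneg : ∀ t ∈ Set.Ico (0 : ℝ) T, 0 ≤ d t)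
    (he_deriv : ∀ t ∈ Set.Ico (0 : ℝ) T, HasDerivWithinAt e (e' t) (Set.Ico 0 T) t)
    (he'_cont : ContinuousOn e' (Set.Ico 0 T))
    (hode : ∀ t ∈ Set.Ioo (0 : ℝ) T, e' t + d t ≤ C * fBihari (e t))
    (he0 : e 0 ≤ α₀) :
    ∀ t, 0 ≤ t → t < min T (2 * FBihari α₀ / C) →
      ∀ m, 0 < m → FBihari m = FBihari α₀ - C / 2 * t →
        e t ≤ m ∧ (∫ s in (0 : ℝ)..t, d s) ≤ α₀ + C * t * fBihari m := by
  intro t ht htlt m hm hFm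
  have hsub : Icc 0 t ⊆ Ico 0 T := Icc_subset_Ico_right (htlt.trans_le (min_le_left _ _))
  have he : ContinuousOn e (Icc 0 t) := fun u hu =>
    (he_deriv u (hsub hu)).continuousWithinAt.mono hsub
  have hderiv : ∀ u ∈ Ioo 0 t, HasDerivAt e (e' u) u := fun u hu =>
    (he_deriv u (hsub (Ioo_subset_Icc_self hu))).hasDerivAt
      (Ico_mem_nhds hu.1 (hsub (Ioo_subset_Icc_self hu)).2)
  have hode' : ∀ u ∈ Ioo 0 t, e' u + d u ≤ C * fBihari (e u) := fun u hu =>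
    hode u ⟨hu.1, (hsub (Ioo_subset_Icc_self hu)).2⟩
  have he_le : ∀ s ∈ Icc 0 t, e s ≤ m :=
    le_of_FBihari_le_sub hC.le hα₀ hm he hderiv
      (fun u hu => by linarith [hode' u hu, hd_nonneg u (hsub (Ioo_subset_Icc_self hu))]) he0
      (by rw [hFm, sub_zero])
  refine ⟨he_le t (right_mem_Icc.2 ht), ?_⟩
  have hint := intervalIntegral.integral_le_of_deriv_add_le ht he hderiv
    ((he'_cont.mono hsub).intervalIntegrable_of_Icc ht)
    ((hd_cont.mono hsub).intervalIntegrable_of_Icc ht)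
    fun u hu => (hode' u hu).trans <| mul_le_mul_of_nonneg_left
      (fBihari_le_fBihari (he_nonneg u (hsub (Ioo_subset_Icc_self hu)))
        (he_le u (Ioo_subset_Icc_self hu))) hC.le
  have het := he_nonneg t (hsub (right_mem_Icc.2 ht))
  linarith [show (t - 0) * (C * fBihari m) = C * t * fBihari m by ring]

/-- Local-in-time Bihari argument: if `e′(t) + d(t) ≤ C·f(e(t))` on `(0, T)` with
`e(0) ≤ α₀`, then for `0 ≤ t < min(T, 2F(α₀)/C)` and any `m > 0` with
`F(m) = F(α₀) − (C/2)t` one has `e(t) ≤ m` and `∫₀ᵗ d ≤ α₀ + C·t·f(m)`. -/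
theorem bihari_local (T C α₀ : ℝ) (hT : 0 < T) (hC : 0 < C) (hα₀ : 0 < α₀)
    (e d e' : ℝ → ℝ)
    (he_cont : ContinuousOn e (Set.Ico 0 T))
    (hd_cont : ContinuousOn d (Set.Ico 0 T))
    (he_nonneg : ∀ t ∈ Set.Ico (0 : ℝ) T, 0 ≤ e t)
    (hd_nonneg : ∀ t ∈ Set.Ico (0 : ℝ) T, 0 ≤ d t)
    (he_deriv : ∀ t ∈ Set.Ico (0 : ℝ) T, HasDerivWithinAt e (e' t) (Set.Ico 0 T) t)
    (he'_cont : ContinuousOn e' (Set.Ico 0 T))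
    (hode : ∀ t ∈ Set.Ioo (0 : ℝ) T, e' t + d t ≤ C * fBihari (e t))
    (he0 : e 0 ≤ α₀) :
    ∀ t, 0 ≤ t → t < min T (2 * FBihari α₀ / C) →
      ∀ m, 0 < m → FBihari m = FBihari α₀ - C / 2 * t →
        e t ≤ m ∧ (∫ s in (0 : ℝ)..t, d s) ≤ α₀ + C * t * fBihari m :=
  bihari_local_general T C α₀ hC hα₀ e d e' hd_cont he_nonneg hd_nonneg he_deriv he'_cont hode he0
end

section
/- Let n ≥ 1, T > 0, let A : [0, T) → ℝ^{n×n} be continuous with A(t) antisymmetric for every t, and let Q : [0, T) → ℝ^{n×n} be differentiable with Q′(t) = A(t)·Q(t) for all t ∈ (0, T) and Q(0) = I. Then Q(t)·Q(t)ᵀ = I and Q(t)ᵀ·Q(t) = I for all t ∈ [0, T); in particular Q(t) is orthogonal for every t. -/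
/-!
`Qᵀ Q` has derivative `Q'ᵀ Q + Qᵀ Q' = Qᵀ (Aᵀ + A) Q = 0` on `(0, T)`, and it is continuous on
`[0, T)`, so it keeps its initial value `I`. For square matrices a one-sided inverse is two-sided.
-/

open Matrix Set

theorem constant_of_hasDerivWithinAt_Ico {E : Type*} [NormedAddCommGroup E] [NormedSpace ℝ E]
    {f f' : ℝ → E} {a b : ℝ} (hf : ∀ x ∈ Ico a b, HasDerivWithinAt f (f' x) (Ico a b) x)
    (hf' : ∀ x ∈ Ioo a b, f' x = 0) : ∀ x ∈ Ico a b, f x = f a := by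
  intro x hx
  have hab : a < b := hx.1.trans_lt hx.2
  obtain ⟨c, hc⟩ := nonempty_Ioo.2 hab
  have hderiv : ∀ y ∈ Ioo a b, HasDerivAt f 0 y := fun y hy =>
    hf' y hy ▸ (hf y (Ioo_subset_Ico_self hy)).hasDerivAt (Ico_mem_nhds_iff.2 hy)
  have hconst : EqOn f (fun _ => f c) (Ioo a b) := fun y hy =>
    isOpen_Ioo.is_const_of_deriv_eq_zero isPreconnected_Ioo
      (fun z hz => (hderiv z hz).differentiableAt.differentiableWithinAt)
      (fun z hz => (hderiv z hz).deriv) hy hc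
  -- Nothing is known about `f' a`: the value at `a` is reached by continuity instead.
  have hcont : ContinuousOn f (Ico a b) := fun y hy => (hf y hy).continuousWithinAt
  have hconst_Ico := hconst.of_subset_closure hcont continuousOn_const Ioo_subset_Ico_self
    (closure_Ioo hab.ne ▸ Ico_subset_Icc_self)
  rw [hconst_Ico hx, hconst_Ico (left_mem_Ico.2 hab)]

theorem Matrix.hasDerivWithinAt_mul_apply {𝕜 l m n : Type*} [NontriviallyNormedField 𝕜]
    [Fintype m] {M : 𝕜 → Matrix l m 𝕜} {N : 𝕜 → Matrix m n 𝕜} {M' : Matrix l m 𝕜}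
    {N' : Matrix m n 𝕜} {s : Set 𝕜} {t : 𝕜}
    (hM : ∀ i j, HasDerivWithinAt (fun τ => M τ i j) (M' i j) s t)
    (hN : ∀ i j, HasDerivWithinAt (fun τ => N τ i j) (N' i j) s t) (i : l) (j : n) :
    HasDerivWithinAt (fun τ => (M τ * N τ) i j) ((M' * N t + M t * N') i j) s t := by
  simp only [mul_apply, add_apply, ← Finset.sum_add_distrib]
  exact HasDerivWithinAt.fun_sum fun k _ => (hM i k).mul (hN k j)

theorem orthogonality_propagates_general (n : ℕ) (T : ℝ)
    (A : ℝ → Matrix (Fin n) (Fin n) ℝ)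
    (hA_anti : ∀ t ∈ Set.Ico (0 : ℝ) T, (A t)ᵀ = -A t)
    (Q Q' : ℝ → Matrix (Fin n) (Fin n) ℝ)
    (hQ_deriv : ∀ t ∈ Set.Ico (0 : ℝ) T, ∀ i j,
      HasDerivWithinAt (fun s => Q s i j) (Q' t i j) (Set.Ico 0 T) t)
    (hQ_ode : ∀ t ∈ Set.Ioo (0 : ℝ) T, Q' t = A t * Q t)
    (hQ0 : Q 0 = 1) :
    ∀ t ∈ Set.Ico (0 : ℝ) T, Q t * (Q t)ᵀ = 1 ∧ (Q t)ᵀ * Q t = 1 := by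
  intro t ht
  suffices h : (Q t)ᵀ * Q t = 1 from ⟨mul_eq_one_comm.mp h, h⟩
  have hderiv_zero : ∀ τ ∈ Ioo (0 : ℝ) T, (Q' τ)ᵀ * Q τ + (Q τ)ᵀ * Q' τ = 0 := by
    intro τ hτ
    rw [hQ_ode τ hτ, transpose_mul, hA_anti τ (Ioo_subset_Ico_self hτ)]
    noncomm_ring
  ext i j
  have hderiv : ∀ τ ∈ Ico (0 : ℝ) T, HasDerivWithinAt (fun τ => ((Q τ)ᵀ * Q τ) i j)
      (((Q' τ)ᵀ * Q τ + (Q τ)ᵀ * Q' τ) i j) (Ico 0 T) τ := fun τ hτ =>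
    hasDerivWithinAt_mul_apply (fun i j => hQ_deriv τ hτ j i) (hQ_deriv τ hτ) i j
  have hconst := constant_of_hasDerivWithinAt_Ico hderiv
    (fun τ hτ => by rw [hderiv_zero τ hτ, Matrix.zero_apply]) t ht
  simpa [hQ0] using hconst

/-- If `Q′(t) = A(t)·Q(t)` on `(0, T)` with `Q(0) = I` and `A(t)` antisymmetric and
continuous, then `Q(t)` is orthogonal for all `t ∈ [0, T)`. Derivatives of
matrix-valued functions are taken entrywise. -/
theorem orthogonality_propagates (n : ℕ) (hn : 1 ≤ n) (T : ℝ) (hT : 0 < T)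
    (A : ℝ → Matrix (Fin n) (Fin n) ℝ)
    (hA_cont : ∀ i j, ContinuousOn (fun t => A t i j) (Set.Ico 0 T))
    (hA_anti : ∀ t ∈ Set.Ico (0 : ℝ) T, (A t)ᵀ = -A t)
    (Q Q' : ℝ → Matrix (Fin n) (Fin n) ℝ)
    (hQ_deriv : ∀ t ∈ Set.Ico (0 : ℝ) T, ∀ i j,
      HasDerivWithinAt (fun s => Q s i j) (Q' t i j) (Set.Ico 0 T) t)
    (hQ_ode : ∀ t ∈ Set.Ioo (0 : ℝ) T, Q' t = A t * Q t)
    (hQ0 : Q 0 = 1) :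
    ∀ t ∈ Set.Ico (0 : ℝ) T, Q t * (Q t)ᵀ = 1 ∧ (Q t)ᵀ * Q t = 1 :=
  orthogonality_propagates_general n T A hA_anti Q Q' hQ_deriv hQ_ode hQ0
end

section
/- (Persistence of the spectrum, ODE form.) Let n ≥ 1, T > 0, let A : [0, T) → ℝ^{n×n} be continuous with A(t) antisymmetric for every t, and let S : [0, T) → ℝ^{n×n} be continuously differentiable with S(t) symmetric for every t and S′(t) = A(t)·S(t) − S(t)·A(t) for all t ∈ (0, T). Then the characteristic polynomial of S(t) equals the characteristic polynomial of S(0) for every t ∈ [0, T); in particular the spectrum of S(t) is independent of t. -/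
/-!
For fixed `x`, differentiate `u ↦ det (x - S u)` by Jacobi's formula: with `P = x - S u` the
derivative is `tr (adj P · (A P - P A))`, because the scalar `x` commutes with `A` and hence
`-S' = S A - A S = A P - P A`. Moving `P` cyclically inside the trace and using
`P · adj P = adj P · P = det P` shows it vanishes, so by the mean value theorem every value of the
characteristic polynomial is constant in `u`.
-/

open Matrix Set

namespace Matrix

variable {n R : Type*} [Fintype n] [DecidableEq n] [CommRing R]

theorem trace_adjugate_mul (M B : Matrix n n R) :
    (adjugate M * B).trace = ∑ i, (M.updateCol i fun k => B k i).det := by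
  refine Finset.sum_congr rfl fun i _ => ?_
  rw [← cramer_apply, cramer_eq_adjugate_mulVec]
  simp [diag, mul_apply, mulVec, dotProduct]

theorem sum_det_updateCol (M B : Matrix n n R) :
    ∑ i, (M.updateCol i fun k => B k i).det =
      ∑ σ : Equiv.Perm n, (Equiv.Perm.sign σ : R) *
        ∑ i, (∏ j ∈ Finset.univ.erase i, M (σ j) j) * B (σ i) i := by
  simp only [det_apply', updateCol_apply]
  rw [Finset.sum_comm]
  refine Finset.sum_congr rfl fun σ _ => ?_
  rw [Finset.mul_sum]
  refine Finset.sum_congr rfl fun i _ => ?_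
  rw [← Finset.mul_prod_erase _ _ (Finset.mem_univ i), if_pos rfl,
    Finset.prod_congr rfl fun j hj => if_neg (Finset.ne_of_mem_erase hj)]
  ring

theorem trace_adjugate_mul_sub_mul (P A : Matrix n n R) :
    (adjugate P * (A * P - P * A)).trace = 0 := by
  rw [mul_sub, trace_sub, ← mul_assoc, trace_mul_cycle, ← mul_assoc, mul_adjugate,
    adjugate_mul, smul_mul, sub_self]

end Matrix

section Jacobi

variable {n 𝕜 : Type*} [Fintype n] [DecidableEq n] [NontriviallyNormedField 𝕜]

theorem hasDerivWithinAt_det {M : 𝕜 → Matrix n n 𝕜} {M' : Matrix n n 𝕜} {s : Set 𝕜}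
    {t : 𝕜} (h : ∀ i j, HasDerivWithinAt (fun u => M u i j) (M' i j) s t) :
    HasDerivWithinAt (fun u => (M u).det) (adjugate (M t) * M').trace s t := by
  rw [trace_adjugate_mul, sum_det_updateCol]
  simp only [det_apply']
  exact HasDerivWithinAt.fun_sum fun σ _ =>
    (HasDerivWithinAt.fun_finsetProd fun i _ => h (σ i) i).const_mul _

end Jacobi

theorem constant_of_hasDerivAt_zero {f : ℝ → ℝ} {a b : ℝ} (hab : a ≤ b)
    (hf : ContinuousOn f (Icc a b)) (hf' : ∀ x ∈ Ioo a b, HasDerivAt f 0 x) : f b = f a := by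
  rcases hab.eq_or_lt with rfl | hab
  · rfl
  obtain ⟨c, -, hc⟩ := exists_hasDerivAt_eq_slope f (fun _ => 0) hab hf hf'
  rw [eq_comm, div_eq_zero_iff, sub_eq_zero] at hc
  exact hc.resolve_right (sub_ne_zero.2 hab.ne')

theorem charpoly_persists_general (n : ℕ) (T : ℝ)
    (A : ℝ → Matrix (Fin n) (Fin n) ℝ)
    (S S' : ℝ → Matrix (Fin n) (Fin n) ℝ)
    (hS_deriv : ∀ t ∈ Set.Ico (0 : ℝ) T, ∀ i j,
      HasDerivWithinAt (fun s => S s i j) (S' t i j) (Set.Ico 0 T) t)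
    (hode : ∀ t ∈ Set.Ioo (0 : ℝ) T, S' t = A t * S t - S t * A t) :
    ∀ t ∈ Set.Ico (0 : ℝ) T, (S t).charpoly = (S 0).charpoly := by
  intro t ht
  refine Polynomial.funext fun x => ?_
  rw [eval_charpoly, eval_charpoly]
  set P := fun u => scalar (Fin n) x - S u
  have hP : ∀ u ∈ Ico 0 T,
      HasDerivWithinAt (fun v => (P v).det) (adjugate (P u) * -S' u).trace (Ico 0 T) u :=
    fun u hu => hasDerivWithinAt_det fun i j => by
      simpa [P] using (hasDerivWithinAt_const u _ _).fun_sub (hS_deriv u hu i j)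
  refine constant_of_hasDerivAt_zero (f := fun v => (P v).det) ht.1 (fun u hu => ?_)
    fun u hu => ?_
  · exact (hP u ⟨hu.1, hu.2.trans_lt ht.2⟩).continuousWithinAt.mono (Icc_subset_Ico_right ht.2)
  · have huT : u < T := hu.2.trans ht.2
    have hlie : -S' u = A u * P u - P u * A u := by
      simp only [P, hode u ⟨hu.1, huT⟩, mul_sub, sub_mul,
        (scalar_commute x (Commute.all x) (A u)).eq]
      abel
    simpa only [hlie, trace_adjugate_mul_sub_mul] using
      (hP u ⟨hu.1.le, huT⟩).hasDerivAt (Ico_mem_nhds hu.1 huT)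

/-- Persistence of the spectrum, ODE form: if the symmetric matrix field `S` solves
`S′(t) = A(t)·S(t) − S(t)·A(t)` with `A(t)` antisymmetric and continuous, then the
characteristic polynomial of `S(t)` is constant in `t`; in particular the spectrum of
`S(t)` is independent of `t`. Derivatives are taken entrywise. -/
theorem charpoly_persists (n : ℕ) (hn : 1 ≤ n) (T : ℝ) (hT : 0 < T)
    (A : ℝ → Matrix (Fin n) (Fin n) ℝ)
    (hA_cont : ∀ i j, ContinuousOn (fun t => A t i j) (Set.Ico 0 T))
    (hA_anti : ∀ t ∈ Set.Ico (0 : ℝ) T, (A t)ᵀ = -A t)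
    (S S' : ℝ → Matrix (Fin n) (Fin n) ℝ)
    (hS_deriv : ∀ t ∈ Set.Ico (0 : ℝ) T, ∀ i j,
      HasDerivWithinAt (fun s => S s i j) (S' t i j) (Set.Ico 0 T) t)
    (hS'_cont : ∀ i j, ContinuousOn (fun t => S' t i j) (Set.Ico 0 T))
    (hS_sym : ∀ t ∈ Set.Ico (0 : ℝ) T, (S t)ᵀ = S t)
    (hode : ∀ t ∈ Set.Ioo (0 : ℝ) T, S' t = A t * S t - S t * A t) :
    ∀ t ∈ Set.Ico (0 : ℝ) T, (S t).charpoly = (S 0).charpoly :=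
  charpoly_persists_general n T A S S' hS_deriv hode
end
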